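/- For every positive integer γ there exists a finite tree T with domination number γ(T) = γ such that Γ(T) > (2/5)·5^{γ/2}, i.e., T has more than (2/5)·√5^γ minimum dominating sets. -/

import Mathlib

/-- A set `D` of vertices is a dominating set if every vertex either lies in `D`
or is adjacent to a vertex of `D`. -/
def IsDominatingSet {V : Type*} (G : SimpleGraph V) (D : Finset V) : Prop :=
  ∀ v : V, v ∈ D ∨ ∃ w ∈ D, G.Adj v w

/-- The domination number: the minimum size of a dominating set. -/
noncomputable def dominationNumber {V : Type*} [Fintype V] (G : SimpleGraph V) : ℕ :=
  sInf {n | ∃ D : Finset V, IsDominatingSet G D ∧ D.card = n}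

/-- The number of minimum dominating sets. -/
noncomputable def numMinDomSets {V : Type*} [Fintype V] (G : SimpleGraph V) : ℕ :=
  Set.ncard {D : Finset V | IsDominatingSet G D ∧ D.card = dominationNumber G}

/-!
Hang `k` copies of the path `0 - 1 - 2 - 3 - 4` by the end `4` on the vertex `1` of a path `P₃`
(for `γ = 2k + 1`) or `P₄` (for `γ = 2k + 2`). A dominating set needs two vertices on each pendant
path to dominate its vertices `0, …, 3`, and one (resp. two) vertices of the core path to dominate
its vertices other than `1`; as this is attained, `γ = 2k + 1` (resp. `2k + 2`). Exactly five pairs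
dominate `0, …, 3` on a pendant path, and three of them dominate all of it. With the core `{1}`
(resp. the cores `{1, 2}`, `{1, 3}`, and `{0, 2}`, which leaves the vertices `4` to the pendant
paths) this gives `5 ^ k` (resp. `2 · 5 ^ k + 3 ^ k`) minimum dominating sets, and
`(2 / 5) · √5 ^ γ` equals `(2 / √5) · 5 ^ k < 5 ^ k` (resp. `2 · 5 ^ k`).
-/

open SimpleGraph Finset Sum

def SimpleGraph.Dominates {V : Type*} (G : SimpleGraph V) (D : Finset V) (v : V) : Prop :=
  v ∈ D ∨ ∃ w ∈ D, G.Adj v w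

instance {V : Type*} [DecidableEq V] (G : SimpleGraph V) [DecidableRel G.Adj] (D : Finset V)
    (v : V) : Decidable (G.Dominates D v) :=
  inferInstanceAs (Decidable (_ ∨ _))

instance {V : Type*} [Fintype V] [DecidableEq V] (G : SimpleGraph V) [DecidableRel G.Adj] :
    DecidablePred (IsDominatingSet G) :=
  fun _ => inferInstanceAs (Decidable (∀ _, _))

instance (n : ℕ) : DecidableRel (pathGraph n).Adj := fun _ _ => decidable_of_iff' _ pathGraph_adj

section Domination

variable {V : Type*} [Fintype V] {G : SimpleGraph V}

lemma dominationNumber_eq_of_le {n : ℕ} {D₀ : Finset V} (hD₀ : IsDominatingSet G D₀)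
    (hcard : #D₀ = n) (hle : ∀ D, IsDominatingSet G D → n ≤ #D) : dominationNumber G = n :=
  le_antisymm (Nat.sInf_le ⟨D₀, hD₀, hcard⟩) (le_csInf ⟨n, D₀, hD₀, hcard⟩ fun _ ⟨D, hD, h⟩ =>
    h ▸ hle D hD)

lemma card_le_numMinDomSets {S : Finset (Finset V)}
    (hS : ∀ D ∈ S, IsDominatingSet G D ∧ #D = dominationNumber G) : #S ≤ numMinDomSets G := by
  rw [numMinDomSets, ← Set.ncard_coe_finset]
  exact Set.ncard_le_ncard hS (Set.toFinite _)

end Domination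

lemma reachable_fromRel_of_parent {V : Type*} {par : V → V} {r : V} (h : V → ℕ)
    (hpar : ∀ v ≠ r, h (par v) < h v) (v : V) : (fromRel fun u v => par u = v).Reachable v r := by
  induction hv : h v using Nat.strong_induction_on generalizing v with
  | _ n ih =>
    by_cases hvr : v = r
    · exact hvr ▸ Reachable.refl _
    · have hadj : (fromRel fun u v => par u = v).Adj v (par v) :=
        ⟨fun he => (hpar v hvr).ne (congrArg h he).symm, Or.inl rfl⟩
      exact hadj.reachable.trans (ih _ (hv ▸ hpar v hvr) _ rfl)

theorem isTree_fromRel_of_parent {V : Type*} [Finite V] {par : V → V} {r : V} (h : V → ℕ)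
    (hr : par r = r) (hpar : ∀ v ≠ r, h (par v) < h v) :
    (fromRel fun u v => par u = v).IsTree := by
  set G := fromRel fun u v => par u = v
  have : Nonempty V := ⟨r⟩
  refine isTree_iff_connected_and_card.2 ⟨⟨fun u v =>
    (reachable_fromRel_of_parent h hpar u).trans (reachable_fromRel_of_parent h hpar v).symm⟩, ?_⟩
  let e : {v // v ≠ r} → G.edgeSet := fun v =>
    ⟨s(v, par v), fun he => (hpar v v.2).ne (congrArg h he).symm, Or.inl rfl⟩
  have he : Function.Bijective e := by
    constructor
    · rintro ⟨v, hv⟩ ⟨w, hw⟩ hvw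
      rcases Sym2.eq_iff.1 (congrArg Subtype.val hvw) with ⟨hvw, -⟩ | ⟨hvw, hwv⟩
      · exact Subtype.ext hvw
      · have h1 := hpar v hv
        have h2 := hpar w hw
        dsimp only at hvw hwv
        rw [hwv] at h1
        rw [← hvw] at h2
        omega
    · rintro ⟨e, he⟩
      induction e using Sym2.ind with
      | _ u w =>
        obtain ⟨hne, huw | hwu⟩ := he
        · dsimp only at hne huw
          exact ⟨⟨u, fun hu => hne (by rw [← huw, hu, hr])⟩, Subtype.ext (by simp [e, huw])⟩
        · dsimp only at hne hwu
          exact ⟨⟨w, fun hw => hne (by rw [← hwu, hw, hr])⟩,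
            Subtype.ext (by simp [e, hwu, Sym2.eq_swap])⟩
  have := Fintype.ofFinite V
  classical
  rw [← Nat.card_congr (Equiv.ofBijective e he), Nat.card_eq_fintype_card,
    Nat.card_eq_fintype_card, Fintype.card_subtype_compl, Fintype.card_subtype_eq]
  have := Fintype.card_pos (α := V)
  omega

namespace PendantTree

section Parts

variable {m k : ℕ}

def ofParts (C : Finset (Fin m)) (L : Fin k → Finset (Fin 5)) : Finset (Fin m ⊕ Fin k × Fin 5) :=
  C.disjSum ((univ.sigma L).map (Equiv.sigmaEquivProd _ _).toEmbedding)

variable {C : Finset (Fin m)} {L : Fin k → Finset (Fin 5)}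

@[simp] lemma inl_mem_ofParts {c : Fin m} : inl c ∈ ofParts C L ↔ c ∈ C := inl_mem_disjSum

@[simp] lemma inr_mem_ofParts {i : Fin k} {j : Fin 5} : inr (i, j) ∈ ofParts C L ↔ j ∈ L i := by
  simp [ofParts]

lemma card_ofParts : #(ofParts C L) = #C + ∑ i, #(L i) := by
  simp [ofParts, card_sigma]

lemma exists_eq_ofParts (D : Finset (Fin m ⊕ Fin k × Fin 5)) : ∃ C L, D = ofParts C L :=
  ⟨({c | inl c ∈ D} : Finset _), fun i => ({j | inr (i, j) ∈ D} : Finset _), by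
    ext (c | ⟨i, j⟩) <;> simp⟩

lemma ofParts_injective {C' : Finset (Fin m)} {L' : Fin k → Finset (Fin 5)}
    (h : ofParts C L = ofParts C' L') : C = C' ∧ L = L' := by
  refine ⟨?_, funext fun i => ?_⟩ <;> ext x
  · simpa using congrArg (inl x ∈ ·) h
  · simpa using congrArg (inr (i, x) ∈ ·) h

end Parts

variable (m k : ℕ) [NeZero m]

def parent : Fin m ⊕ Fin k × Fin 5 → Fin m ⊕ Fin k × Fin 5
  | inl c => inl ⟨c - 1, by omega⟩
  | inr (i, j) => if j = 4 then inl 1 else inr (i, j + 1)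

end PendantTree

/-- The path `0 - 1 - ⋯ - (m - 1)` rooted at `0` (note `0 - 1 = 0` in `ℕ`), with `k` copies
`(i, 0) - ⋯ - (i, 4)` of the path on five vertices hanging from its vertex `1` by the ends `(i, 4)`. -/
def pendantTree (m k : ℕ) [NeZero m] : SimpleGraph (Fin m ⊕ Fin k × Fin 5) :=
  fromRel fun u v => PendantTree.parent m k u = v

namespace PendantTree

variable {m k : ℕ} [NeZero m]

@[simp] lemma adj_inl_inl {a b : Fin m} :
    (pendantTree m k).Adj (inl a) (inl b) ↔ (pathGraph m).Adj a b := by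
  simp only [pendantTree, fromRel_adj, parent, inl.injEq, pathGraph_adj, ne_eq, Fin.ext_iff]
  omega

@[simp] lemma adj_inl_inr {a : Fin m} {i : Fin k} {j : Fin 5} :
    (pendantTree m k).Adj (inl a) (inr (i, j)) ↔ a = 1 ∧ j = 4 := by
  simp only [pendantTree, fromRel_adj, parent]
  split_ifs <;> simp_all [eq_comm]

@[simp] lemma adj_inr_inl {a : Fin m} {i : Fin k} {j : Fin 5} :
    (pendantTree m k).Adj (inr (i, j)) (inl a) ↔ a = 1 ∧ j = 4 := by
  rw [adj_comm, adj_inl_inr]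

@[simp] lemma adj_inr_inr {i i' : Fin k} {j j' : Fin 5} :
    (pendantTree m k).Adj (inr (i, j)) (inr (i', j')) ↔ i = i' ∧ (pathGraph 5).Adj j j' := by
  simp only [pendantTree, fromRel_adj, parent, pathGraph_adj]
  fin_cases j <;> fin_cases j' <;> simp <;> tauto

theorem isTree_pendantTree : (pendantTree m k).IsTree := by
  refine isTree_fromRel_of_parent (r := inl 0) (Sum.elim Fin.val fun p => m + 5 - p.2) rfl ?_
  rintro (c | ⟨i, j⟩) hv
  · have := Fin.pos_iff_ne_zero.2 fun h : c = 0 => hv (h ▸ rfl)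
    simp only [parent, elim_inl]
    omega
  · simp only [parent]
    split_ifs with hj
    · have := (1 : Fin m).isLt
      simp only [elim_inl, elim_inr]
      omega
    · simp only [elim_inr]
      have : (j + 1).val = j.val + 1 := by omega
      omega

variable {C : Finset (Fin m)} {L : Fin k → Finset (Fin 5)}

lemma dominates_inl_iff {c : Fin m} :
    (pendantTree m k).Dominates (ofParts C L) (inl c) ↔
      (pathGraph m).Dominates C c ∨ (c = 1 ∧ ∃ i, 4 ∈ L i) := by
  simp only [Dominates, Sum.exists, Prod.exists, inl_mem_ofParts, inr_mem_ofParts, adj_inl_inl,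
    adj_inl_inr]
  aesop

lemma dominates_inr_iff {i : Fin k} {j : Fin 5} :
    (pendantTree m k).Dominates (ofParts C L) (inr (i, j)) ↔
      (pathGraph 5).Dominates (L i) j ∨ (j = 4 ∧ 1 ∈ C) := by
  simp only [Dominates, Sum.exists, Prod.exists, inl_mem_ofParts, inr_mem_ofParts, adj_inr_inl,
    adj_inr_inr]
  aesop

/-- Pairs dominating a pendant path, whose end `4` may be dominated from outside if `ported`. -/
def legConfigs (ported : Prop) [Decidable ported] : Finset (Finset (Fin 5)) :=
  {L | #L = 2 ∧ ∀ j, (pathGraph 5).Dominates L j ∨ (j = 4 ∧ ported)}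

lemma two_le_card_of_dominates (L : Finset (Fin 5)) (hL : ∀ j ≠ 4, (pathGraph 5).Dominates L j) :
    2 ≤ #L := by
  revert L; decide

lemma isDominatingSet_ofParts (hC : IsDominatingSet (pathGraph m) C)
    (hL : ∀ i j, (pathGraph 5).Dominates (L i) j ∨ (j = 4 ∧ 1 ∈ C)) :
    IsDominatingSet (pendantTree m k) (ofParts C L) := by
  rintro (c | ⟨i, j⟩)
  · exact dominates_inl_iff.2 (Or.inl (hC c))
  · exact dominates_inr_iff.2 (hL i j)

theorem dominationNumber_pendantTree {b : ℕ} {C₀ : Finset (Fin m)}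
    (hC₀ : IsDominatingSet (pathGraph m) C₀) (hcard : #C₀ = b)
    (hle : ∀ C : Finset (Fin m), (∀ c ≠ 1, (pathGraph m).Dominates C c) → b ≤ #C) :
    dominationNumber (pendantTree m k) = b + 2 * k := by
  refine dominationNumber_eq_of_le (D₀ := ofParts C₀ fun _ => {1, 3})
    (isDominatingSet_ofParts hC₀ fun _ j => Or.inl (by revert j; decide)) ?_ ?_
  · simp [card_ofParts, hcard, mul_comm]
  · intro D hD
    obtain ⟨C, L, rfl⟩ := exists_eq_ofParts D
    have hcore : b ≤ #C := hle C fun c hc =>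
      (dominates_inl_iff.1 (hD (inl c))).resolve_right fun h => hc h.1
    have hlegs : ∀ i, 2 ≤ #(L i) := fun i => two_le_card_of_dominates _ fun j hj =>
      (dominates_inr_iff.1 (hD (inr (i, j)))).resolve_right fun h => hj h.1
    calc b + 2 * k = b + ∑ _ : Fin k, 2 := by simp [mul_comm]
      _ ≤ #C + ∑ i, #(L i) := add_le_add hcore (sum_le_sum fun i _ => hlegs i)
      _ = #(ofParts C L) := card_ofParts.symm

theorem sum_card_legConfigs_pow_le_numMinDomSets {b : ℕ}
    (hγ : dominationNumber (pendantTree m k) = b + 2 * k) (𝒞 : Finset (Finset (Fin m)))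
    (h𝒞 : ∀ C ∈ 𝒞, IsDominatingSet (pathGraph m) C ∧ #C = b) :
    ∑ C ∈ 𝒞, #(legConfigs (1 ∈ C)) ^ k ≤ numMinDomSets (pendantTree m k) := by
  let S := 𝒞.sigma fun C => Fintype.piFinset fun _ : Fin k => legConfigs (1 ∈ C)
  have hS : #S = ∑ C ∈ 𝒞, #(legConfigs (1 ∈ C)) ^ k := by simp [S, card_sigma]
  rw [← hS, ← card_image_of_injective S (f := fun x => ofParts x.1 x.2) fun x y h => ?_]
  · refine card_le_numMinDomSets fun D hD => ?_
    obtain ⟨⟨C, L⟩, hCL, rfl⟩ := mem_image.1 hD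
    obtain ⟨hC, hL⟩ := mem_sigma.1 hCL
    have hLi : ∀ i, L i ∈ legConfigs (1 ∈ C) := Fintype.mem_piFinset.1 hL
    refine ⟨isDominatingSet_ofParts (h𝒞 C hC).1 fun i => (mem_filter.1 (hLi i)).2.2, ?_⟩
    simp [card_ofParts, hγ, (h𝒞 C hC).2, fun i => (mem_filter.1 (hLi i)).2.1, mul_comm]
  · obtain ⟨h1, h2⟩ := ofParts_injective h
    exact Sigma.ext h1 (heq_of_eq h2)

lemma dominationNumber_pendantTree_three (k : ℕ) :
    dominationNumber (pendantTree 3 k) = 2 * k + 1 := by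
  rw [dominationNumber_pendantTree (C₀ := {1}) (b := 1) (by decide) rfl (by decide), add_comm]

lemma dominationNumber_pendantTree_four (k : ℕ) :
    dominationNumber (pendantTree 4 k) = 2 * k + 2 := by
  rw [dominationNumber_pendantTree (C₀ := {1, 2}) (b := 2) (by decide) rfl (by decide), add_comm]

lemma five_pow_le_numMinDomSets_pendantTree_three (k : ℕ) :
    5 ^ k ≤ numMinDomSets (pendantTree 3 k) := by
  have h := sum_card_legConfigs_pow_le_numMinDomSets (k := k)
    (by rw [dominationNumber_pendantTree_three, add_comm]) {{1}} (by decide)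
  rwa [sum_singleton, show #(legConfigs (1 ∈ ({1} : Finset (Fin 3)))) = 5 by decide] at h

lemma le_numMinDomSets_pendantTree_four (k : ℕ) :
    2 * 5 ^ k + 3 ^ k ≤ numMinDomSets (pendantTree 4 k) := by
  have h := sum_card_legConfigs_pow_le_numMinDomSets (k := k)
    (by rw [dominationNumber_pendantTree_four, add_comm]) {{1, 2}, {1, 3}, {0, 2}} (by decide)
  rw [sum_insert (by decide), sum_insert (by decide), sum_singleton,
    show #(legConfigs (1 ∈ ({1, 2} : Finset (Fin 4)))) = 5 by decide,
    show #(legConfigs (1 ∈ ({1, 3} : Finset (Fin 4)))) = 5 by decide,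
    show #(legConfigs (1 ∈ ({0, 2} : Finset (Fin 4)))) = 3 by decide] at h
  omega

end PendantTree

open PendantTree

theorem exists_tree_many_minDomSets (γ : ℕ) (hγ : 0 < γ) :
    ∃ (V : Type) (_ : Fintype V) (G : SimpleGraph V),
      G.IsTree ∧ dominationNumber G = γ ∧
      (2 / 5 : ℝ) * Real.sqrt 5 ^ γ < (numMinDomSets G : ℝ) := by
  obtain ⟨k, rfl | rfl⟩ : ∃ k, γ = 2 * k + 1 ∨ γ = 2 * k + 2 := ⟨(γ - 1) / 2, by omega⟩
  · refine ⟨_, inferInstance, pendantTree 3 k, isTree_pendantTree,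
      dominationNumber_pendantTree_three k, ?_⟩
    have hsqrt : Real.sqrt 5 < 5 / 2 := by
      rw [Real.sqrt_lt' (by norm_num)]
      norm_num
    calc (2 / 5 : ℝ) * Real.sqrt 5 ^ (2 * k + 1) = 2 / 5 * Real.sqrt 5 * 5 ^ k := by
          rw [pow_succ, pow_mul, Real.sq_sqrt (by norm_num)]
          ring
      _ < 5 ^ k := by nlinarith [pow_pos (show (0 : ℝ) < 5 by norm_num) k]
      _ ≤ numMinDomSets (pendantTree 3 k) := by
          exact_mod_cast five_pow_le_numMinDomSets_pendantTree_three k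
  · refine ⟨_, inferInstance, pendantTree 4 k, isTree_pendantTree,
      dominationNumber_pendantTree_four k, ?_⟩
    calc (2 / 5 : ℝ) * Real.sqrt 5 ^ (2 * k + 2) = 2 * 5 ^ k := by
          rw [show 2 * k + 2 = 2 * (k + 1) by ring, pow_mul, Real.sq_sqrt (by norm_num), pow_succ]
          ring
      _ < 2 * 5 ^ k + 3 ^ k := lt_add_of_pos_right _ (by positivity)
      _ ≤ numMinDomSets (pendantTree 4 k) := by
          exact_mod_cast le_numMinDomSets_pendantTree_four k
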